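/- Let ζ ∈ ℂ with |ζ| = 1 and p₂ ∈ ℂ with |p₂| < 1, and let u : ℕ → 𝔻², u_n = (u_n¹, u_n²), be a sequence converging to (ζ, p₂). Then for every R > 0 the horosphere of u in the bidisc with base point (0,0) satisfies E_{(0,0)}(u, R) = {z₁ ∈ 𝔻 : |ζ − z₁|²/(1 − |z₁|²) < R} × 𝔻. -/

import Mathlib

open Filter Set

noncomputable section

/-- The inverse hyperbolic tangent: `artanh r = (1/2) log ((1+r)/(1-r))`. -/
def artanh (r : ℝ) : ℝ := (1 / 2) * Real.log ((1 + r) / (1 - r))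

/-- The Poincaré (Kobayashi) distance on the unit disc
`ρ(z,w) = artanh |(z - w)/(1 - conj w * z)|`. -/
def pd (z w : ℂ) : ℝ := artanh ‖(z - w) / (1 - (starRingEnd ℂ) w * z)‖

/-- The Kobayashi distance of the bidisc. -/
def kd2 (z w : ℂ × ℂ) : ℝ := max (pd z.1 w.1) (pd z.2 w.2)

/-- The open unit bidisc. -/
def bidisc : Set (ℂ × ℂ) := {z : ℂ × ℂ | ‖z.1‖ < 1 ∧ ‖z.2‖ < 1}

/-- The horosphere in the bidisc of a sequence `u` with respect to base point `x`
and radius `R`. -/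
def biE (x : ℂ × ℂ) (u : ℕ → ℂ × ℂ) (R : ℝ) : Set (ℂ × ℂ) :=
  {z : ℂ × ℂ | z ∈ bidisc ∧
    Filter.limsup (fun n => kd2 z (u n) - kd2 x (u n)) Filter.atTop < (1 / 2) * Real.log R}

/-!
For `z` in the bidisc and `u n → (ζ, p₂)`, the distances `ρ(z₁, u n¹)` and `ρ(0, u n¹)` tend to
infinity while the second coordinates stay bounded, so eventually both Kobayashi distances are
attained in the first coordinate and the horofunction is that of the disc. There
`ρ(z₁, w) - ρ(0, w) = ½ log (horoRatio z₁ w)`, and `horoRatio z₁` is continuous up to `w = ζ`,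
where it equals `|ζ - z₁|² / (1 - |z₁|²)` since `|1 - conj ζ z₁| = |ζ - z₁|` on `|ζ| = 1`.
So the limsup is a genuine limit, independent of `z₂`, and comparing it with `½ log R` gives
the claim.
-/

open Topology Metric

attribute [local fun_prop] Complex.continuous_conj

section Disc

variable {z w ζ : ℂ}

theorem norm_one_sub_conj_mul_sq (z w : ℂ) :
    ‖1 - starRingEnd ℂ w * z‖ ^ 2 = ‖z - w‖ ^ 2 + (1 - ‖z‖ ^ 2) * (1 - ‖w‖ ^ 2) := by
  simp only [Complex.sq_norm, Complex.normSq_apply, Complex.sub_re, Complex.sub_im,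
    Complex.mul_re, Complex.mul_im, Complex.one_re, Complex.one_im, Complex.conj_re,
    Complex.conj_im]
  ring

theorem one_sub_conj_mul_ne_zero (hz : ‖z‖ < 1) (hw : ‖w‖ ≤ 1) :
    1 - starRingEnd ℂ w * z ≠ 0 := by
  rw [sub_ne_zero]
  intro h
  have := congrArg norm h
  rw [norm_one, norm_mul, Complex.norm_conj] at this
  nlinarith [norm_nonneg w, norm_nonneg z]

theorem norm_one_sub_conj_mul_of_norm_eq_one (hw : ‖w‖ = 1) (z : ℂ) :
    ‖1 - starRingEnd ℂ w * z‖ = ‖w - z‖ := by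
  have hconj : starRingEnd ℂ w * w = 1 := by
    rw [Complex.conj_mul', hw]; norm_num
  rw [← hconj, ← mul_sub, norm_mul, Complex.norm_conj, hw, one_mul]

theorem one_sub_sq_norm_mobius (hz : ‖z‖ < 1) (hw : ‖w‖ < 1) :
    1 - ‖(z - w) / (1 - starRingEnd ℂ w * z)‖ ^ 2 =
      (1 - ‖z‖ ^ 2) * (1 - ‖w‖ ^ 2) / ‖1 - starRingEnd ℂ w * z‖ ^ 2 := by
  have hD : ‖1 - starRingEnd ℂ w * z‖ ≠ 0 := norm_ne_zero_iff.2 (one_sub_conj_mul_ne_zero hz hw.le)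
  rw [norm_div, div_pow, eq_div_iff (pow_ne_zero 2 hD), sub_mul, div_mul_cancel₀ _ (pow_ne_zero 2 hD),
    norm_one_sub_conj_mul_sq]
  ring

theorem norm_mobius_lt_one (hz : ‖z‖ < 1) (hw : ‖w‖ < 1) :
    ‖(z - w) / (1 - starRingEnd ℂ w * z)‖ < 1 := by
  have hpos : 0 < 1 - ‖(z - w) / (1 - starRingEnd ℂ w * z)‖ ^ 2 := by
    rw [one_sub_sq_norm_mobius hz hw]
    have := one_sub_conj_mul_ne_zero hz hw.le
    have : 0 < 1 - ‖z‖ ^ 2 := by nlinarith [norm_nonneg z]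
    have : 0 < 1 - ‖w‖ ^ 2 := by nlinarith [norm_nonneg w]
    positivity
  nlinarith [norm_nonneg ((z - w) / (1 - starRingEnd ℂ w * z))]

theorem norm_sub_sq_div_one_sub_norm_sq_pos (hz : ‖z‖ < 1) (hζ : ‖ζ‖ = 1) :
    0 < ‖ζ - z‖ ^ 2 / (1 - ‖z‖ ^ 2) := by
  have hne : ζ - z ≠ 0 := by
    rw [sub_ne_zero]; rintro rfl; linarith
  have : 0 < 1 - ‖z‖ ^ 2 := by nlinarith [norm_nonneg z]
  positivity

end Disc

section Artanh

theorem artanh_eq_half_log_sq_div {r : ℝ} (hr : |r| < 1) :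
    artanh r = 1 / 2 * Real.log ((1 + r) ^ 2 / (1 - r ^ 2)) := by
  obtain ⟨h₁, h₂⟩ := abs_lt.1 hr
  have : 1 + r ≠ 0 := by linarith
  have : 1 - r ≠ 0 := by linarith
  rw [artanh, show 1 - r ^ 2 = (1 - r) * (1 + r) by ring]
  congr 2
  field_simp

theorem continuousAt_artanh {r : ℝ} (hr : |r| < 1) : ContinuousAt artanh r := by
  obtain ⟨h₁, h₂⟩ := abs_lt.1 hr
  have : 1 - r ≠ 0 := by linarith
  have : (1 + r) / (1 - r) ≠ 0 := (div_pos (by linarith) (by linarith)).ne'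
  unfold artanh
  fun_prop (disch := assumption)

theorem tendsto_artanh_nhdsLT_one : Tendsto artanh (𝓝[<] 1) atTop := by
  have hden : Tendsto (fun r : ℝ => 1 - r) (𝓝[<] 1) (𝓝[>] 0) := by
    refine tendsto_nhdsWithin_iff.2 ⟨?_, eventually_nhdsWithin_of_forall fun r hr => ?_⟩
    · simpa using (tendsto_const_nhds.sub tendsto_id : Tendsto (fun r : ℝ => 1 - r) (𝓝 1) _)
        |>.mono_left nhdsWithin_le_nhds
    · simpa using hr
  have hnum : Tendsto (fun r : ℝ => 1 + r) (𝓝[<] 1) (𝓝 2) := by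
    have := (tendsto_const_nhds.add tendsto_id : Tendsto (fun r : ℝ => 1 + r) (𝓝 1) _)
    norm_num at this
    exact this.mono_left nhdsWithin_le_nhds
  have := ((tendsto_inv_nhdsGT_zero.comp hden).atTop_mul_pos two_pos hnum)
  refine (Real.tendsto_log_atTop.comp ?_).const_mul_atTop one_half_pos
  simpa [div_eq_inv_mul] using this

end Artanh

section Poincare

variable {z w ζ : ℂ}

theorem pd_zero_left (w : ℂ) : pd 0 w = artanh ‖w‖ := by
  simp [pd]

theorem continuousAt_pd (hz : ‖z‖ < 1) (hw : ‖w‖ < 1) : ContinuousAt (pd z) w := by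
  have hm : |‖(z - w) / (1 - starRingEnd ℂ w * z)‖| < 1 := by
    rw [abs_norm]; exact norm_mobius_lt_one hz hw
  have := one_sub_conj_mul_ne_zero hz hw.le
  exact (continuousAt_artanh hm).comp (f := fun w => ‖(z - w) / (1 - starRingEnd ℂ w * z)‖)
    (by fun_prop (disch := assumption))

/-- `exp (2 (pd z w - pd 0 w))` for `z, w ∈ 𝔻` (see `pd_sub_pd_zero_eq`). -/
def horoRatio (z w : ℂ) : ℝ :=
  (1 + ‖(z - w) / (1 - starRingEnd ℂ w * z)‖) ^ 2 * ‖1 - starRingEnd ℂ w * z‖ ^ 2 /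
    ((1 - ‖z‖ ^ 2) * (1 + ‖w‖) ^ 2)

theorem pd_sub_pd_zero_eq (hz : ‖z‖ < 1) (hw : ‖w‖ < 1) :
    pd z w - pd 0 w = 1 / 2 * Real.log (horoRatio z w) := by
  have hm : |‖(z - w) / (1 - starRingEnd ℂ w * z)‖| < 1 := by
    rw [abs_norm]; exact norm_mobius_lt_one hz hw
  have hD : ‖1 - starRingEnd ℂ w * z‖ ≠ 0 := norm_ne_zero_iff.2 (one_sub_conj_mul_ne_zero hz hw.le)
  have hz' : 1 - ‖z‖ ^ 2 ≠ 0 := by nlinarith [norm_nonneg z]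
  have hw' : 1 - ‖w‖ ^ 2 ≠ 0 := by nlinarith [norm_nonneg w]
  rw [pd, artanh_eq_half_log_sq_div hm, one_sub_sq_norm_mobius hz hw, pd_zero_left,
    artanh_eq_half_log_sq_div (by rwa [abs_norm]), ← mul_sub,
    ← Real.log_div (by positivity) (by positivity), horoRatio]
  congr 2
  field_simp

theorem horoRatio_of_norm_eq_one (hz : ‖z‖ < 1) (hζ : ‖ζ‖ = 1) :
    horoRatio z ζ = ‖ζ - z‖ ^ 2 / (1 - ‖z‖ ^ 2) := by
  have hne : ‖ζ - z‖ ≠ 0 := by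
    rw [norm_ne_zero_iff, sub_ne_zero]; rintro rfl; linarith
  rw [horoRatio, norm_div, norm_one_sub_conj_mul_of_norm_eq_one hζ, norm_sub_rev z, div_self hne, hζ]
  have : 1 - ‖z‖ ^ 2 ≠ 0 := by nlinarith [norm_nonneg z]
  field_simp

theorem continuousAt_horoRatio (hz : ‖z‖ < 1) (hζ : ‖ζ‖ ≤ 1) : ContinuousAt (horoRatio z) ζ := by
  have := one_sub_conj_mul_ne_zero hz hζ
  have : (1 - ‖z‖ ^ 2) * (1 + ‖ζ‖) ^ 2 ≠ 0 := by
    have : 0 < 1 - ‖z‖ ^ 2 := by nlinarith [norm_nonneg z]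
    positivity
  unfold horoRatio
  fun_prop (disch := assumption)

theorem tendsto_pd_sub_pd_zero (hz : ‖z‖ < 1) (hζ : ‖ζ‖ = 1) :
    Tendsto (fun w => pd z w - pd 0 w) (𝓝[ball 0 1] ζ)
      (𝓝 (1 / 2 * Real.log (‖ζ - z‖ ^ 2 / (1 - ‖z‖ ^ 2)))) := by
  rw [← horoRatio_of_norm_eq_one hz hζ]
  have hlim := ((continuousAt_horoRatio hz hζ.le).log
    (by rw [horoRatio_of_norm_eq_one hz hζ]; exact (norm_sub_sq_div_one_sub_norm_sq_pos hz hζ).ne'))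
  refine Tendsto.congr' ?_ ((hlim.const_mul (1 / 2)).tendsto.mono_left nhdsWithin_le_nhds)
  filter_upwards [self_mem_nhdsWithin] with w hw
  exact (pd_sub_pd_zero_eq hz (mem_ball_zero_iff.1 hw)).symm

theorem tendsto_pd_zero_atTop (hζ : ‖ζ‖ = 1) : Tendsto (pd 0) (𝓝[ball 0 1] ζ) atTop := by
  have hnorm : Tendsto norm (𝓝[ball (0 : ℂ) 1] ζ) (𝓝[<] 1) := by
    refine tendsto_nhdsWithin_iff.2 ⟨?_, ?_⟩
    · rw [← hζ]; exact continuous_norm.continuousWithinAt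
    · filter_upwards [self_mem_nhdsWithin] with w hw using mem_ball_zero_iff.1 hw
  rw [show pd 0 = artanh ∘ norm from funext pd_zero_left]
  exact tendsto_artanh_nhdsLT_one.comp hnorm

theorem tendsto_pd_atTop (hz : ‖z‖ < 1) (hζ : ‖ζ‖ = 1) : Tendsto (pd z) (𝓝[ball 0 1] ζ) atTop :=
  ((tendsto_pd_sub_pd_zero hz hζ).add_atTop (tendsto_pd_zero_atTop hζ)).congr fun w => by ring

end Poincare

theorem eventually_max_eq_left_of_tendsto {α : Type*} {l : Filter α} {f g : α → ℝ} {b : ℝ}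
    (hf : Tendsto f l atTop) (hg : Tendsto g l (𝓝 b)) : ∀ᶠ x in l, max (f x) (g x) = f x := by
  filter_upwards [hf.eventually_ge_atTop (b + 1), hg.eventually (eventually_le_nhds (lt_add_one b))]
    with x hf hg
  exact max_eq_left (by linarith)

theorem tendsto_kd2_sub_kd2_zero {ζ p : ℂ} {z : ℂ × ℂ} (hζ : ‖ζ‖ = 1) (hp : ‖p‖ < 1)
    (hz : z ∈ bidisc) :
    Tendsto (fun w => kd2 z w - kd2 (0, 0) w) (𝓝[bidisc] (ζ, p))
      (𝓝 (1 / 2 * Real.log (‖ζ - z.1‖ ^ 2 / (1 - ‖z.1‖ ^ 2)))) := by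
  have hfst : Tendsto Prod.fst (𝓝[bidisc] (ζ, p)) (𝓝[ball 0 1] ζ) :=
    tendsto_nhdsWithin_iff.2 ⟨continuous_fst.continuousWithinAt,
      by filter_upwards [self_mem_nhdsWithin] with w hw using mem_ball_zero_iff.2 hw.1⟩
  have hsnd : Tendsto Prod.snd (𝓝[bidisc] (ζ, p)) (𝓝 p) := continuous_snd.continuousWithinAt
  have hmax_z : ∀ᶠ w in 𝓝[bidisc] (ζ, p), max (pd z.1 w.1) (pd z.2 w.2) = pd z.1 w.1 :=
    eventually_max_eq_left_of_tendsto ((tendsto_pd_atTop hz.1 hζ).comp hfst)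
      ((continuousAt_pd hz.2 hp).tendsto.comp hsnd)
  have hmax_0 : ∀ᶠ w in 𝓝[bidisc] (ζ, p), max (pd 0 w.1) (pd 0 w.2) = pd 0 w.1 :=
    eventually_max_eq_left_of_tendsto ((tendsto_pd_zero_atTop hζ).comp hfst)
      ((continuousAt_pd (by simp) hp).tendsto.comp hsnd)
  refine ((tendsto_pd_sub_pd_zero hz.1 hζ).comp hfst).congr' ?_
  filter_upwards [hmax_z, hmax_0] with w h_z h_0
  simp only [kd2, Function.comp_apply, h_z, h_0]

theorem biE_of_interior_second_coordinate (ζ p₂ : ℂ) (hζ : ‖ζ‖ = 1)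
    (hp₂ : ‖p₂‖ < 1) (u : ℕ → ℂ × ℂ) (hu : ∀ n, u n ∈ bidisc)
    (hconv : Filter.Tendsto u Filter.atTop (nhds (ζ, p₂))) :
    ∀ R > (0 : ℝ), biE ((0 : ℂ), (0 : ℂ)) u R =
      {z₁ : ℂ | ‖z₁‖ < 1 ∧
        ‖ζ - z₁‖ ^ 2 / (1 - ‖z₁‖ ^ 2) < R} ×ˢ
      {z₂ : ℂ | ‖z₂‖ < 1} := by
  intro R hR
  have hu' : Tendsto u atTop (𝓝[bidisc] (ζ, p₂)) :=
    tendsto_nhdsWithin_iff.2 ⟨hconv, Eventually.of_forall hu⟩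
  have key : ∀ z ∈ bidisc,
      limsup (fun n => kd2 z (u n) - kd2 (0, 0) (u n)) atTop < 1 / 2 * Real.log R ↔
        ‖ζ - z.1‖ ^ 2 / (1 - ‖z.1‖ ^ 2) < R := by
    intro z hz
    have hlim : Tendsto (fun n => kd2 z (u n) - kd2 (0, 0) (u n)) atTop _ :=
      (tendsto_kd2_sub_kd2_zero hζ hp₂ hz).comp hu'
    rw [hlim.limsup_eq, mul_lt_mul_iff_right₀ one_half_pos,
      Real.log_lt_log_iff (norm_sub_sq_div_one_sub_norm_sq_pos hz.1 hζ) hR]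
  ext z
  constructor
  · rintro ⟨hz, hlt⟩
    exact ⟨⟨hz.1, (key z hz).1 hlt⟩, hz.2⟩
  · rintro ⟨⟨h₁, hlt⟩, h₂⟩
    exact ⟨⟨h₁, h₂⟩, (key z ⟨h₁, h₂⟩).2 hlt⟩
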